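/- arXiv:2103.09654 — 4 statements merged into one kernel-verified Lean document; each statement's English description precedes it below -/
import Mathlib

section
/- The Madhava–Leibniz series for π: π = √12 · Σ_{k=0}^∞ (-3)^{-k}/(2k+1). -/
/-- The Madhava–Leibniz series for π. -/
theorem madhava_leibniz_series :
    Real.pi = Real.sqrt 12 * ∑' k : ℕ, ((-1/3 : ℝ) ^ k) / (2 * k + 1) := by
  have h3 : (1:ℝ) < Real.sqrt 3 := by
    rw [show (1:ℝ) = Real.sqrt 1 by simp]
    exact Real.sqrt_lt_sqrt (by norm_num) (by norm_num)
  have h3' : (0:ℝ) < Real.sqrt 3 := by linarith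
  have hs : HasSum (fun n : ℕ => (-1:ℝ) ^ n * (1 / Real.sqrt 3) ^ (2 * n + 1) / ↑(2 * n + 1))
      (Real.arctan (1 / Real.sqrt 3)) :=
    Real.hasSum_arctan (by rw [Real.norm_eq_abs, abs_of_pos (by positivity)]
                           rw [div_lt_one h3']; linarith)
  have harctan : Real.arctan (1 / Real.sqrt 3) = Real.pi / 6 := by
    rw [← Real.tan_pi_div_six, Real.arctan_tan] <;> [skip; skip] <;>
      nlinarith [Real.pi_gt_three, Real.pi_pos]
  rw [harctan] at hs
  have hsq : (1 / Real.sqrt 3 : ℝ) ^ 2 = 1 / 3 := by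
    rw [div_pow, Real.sq_sqrt (by norm_num : (3:ℝ) ≥ 0)]; norm_num
  have key : ∀ n : ℕ, (-1:ℝ) ^ n * (1 / Real.sqrt 3) ^ (2 * n + 1) / ↑(2 * n + 1)
      = (1 / Real.sqrt 3) * (((-1/3 : ℝ) ^ n) / (2 * n + 1)) := by
    intro n
    rw [pow_succ, pow_mul, hsq]
    rw [show ((-1:ℝ)/3)^n = (-1:ℝ)^n * (1/3)^n by rw [← mul_pow]; norm_num]
    push_cast
    ring
  simp_rw [key] at hs
  have hs2 : HasSum (fun n : ℕ => ((-1/3 : ℝ) ^ n) / (2 * n + 1))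
      (Real.sqrt 3 * (Real.pi / 6)) := by
    have := hs.mul_left (Real.sqrt 3)
    simp_rw [← mul_assoc, mul_one_div, div_self (ne_of_gt h3'), one_mul] at this
    convert this using 2
  rw [hs2.tsum_eq]
  have h12 : Real.sqrt 12 = 2 * Real.sqrt 3 := by
    rw [show (12:ℝ) = 2^2 * 3 by norm_num, Real.sqrt_mul (by positivity),
      Real.sqrt_sq (by norm_num)]
  rw [h12]
  nlinarith [Real.sq_sqrt (by norm_num : (3:ℝ) ≥ 0), Real.pi_pos]
end

section
/- Orthogonality of distinct Ramanujan sums: if q₁ ≠ q₂ are positive integers and l is any common multiple of q₁ and q₂, then Σ_{n=0}^{l-1} c_{q₁}(n)·c_{q₂}(n) = 0. -/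
/-- The Ramanujan sum `c_q(n)`. -/
noncomputable def ramanujanSum (q : ℕ) (n : ℤ) : ℂ :=
  ∑ k ∈ (Finset.Icc 1 q).filter (fun k => Nat.gcd k q = 1),
    Complex.exp (2 * Real.pi * Complex.I * k * n / q)

lemma geom_sum_zero_of_ne_one (z : ℂ) (l : ℕ) (hz : z ≠ 1) (hzl : z ^ l = 1) :
    ∑ n ∈ Finset.range l, z ^ n = 0 := by
  have h := geom_sum_mul z l
  rw [hzl, sub_self] at h
  rcases mul_eq_zero.mp h with h' | h'
  · exact h'
  · exact absurd (sub_eq_zero.mp h') hz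

lemma dvd_aux (q₁ d₁ q₂ d₂ k₁ k₂ l : ℕ) (hld₁ : l = q₁ * d₁) (hld₂ : l = q₂ * d₂)
    (hd₁pos : 0 < d₁) (hcop : Nat.gcd k₁ q₁ = 1)
    (hdvd : l ∣ k₁ * d₁ + k₂ * d₂) : q₁ ∣ q₂ := by
  have h2 : l ∣ q₂ * (k₁ * d₁ + k₂ * d₂) := hdvd.mul_left q₂
  have heq : q₂ * (k₁ * d₁ + k₂ * d₂) = (q₂ * k₁) * d₁ + k₂ * l := by
    rw [hld₂]; ring
  rw [heq] at h2
  have hB : l ∣ k₂ * l := dvd_mul_left l k₂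
  have h3 : l ∣ (q₂ * k₁) * d₁ := by
    have hs := Nat.dvd_sub (hdvd.mul_left q₂) hB
    have he : q₂ * (k₁ * d₁ + k₂ * d₂) - k₂ * l = (q₂ * k₁) * d₁ := by
      rw [hld₂, show q₂ * (k₁ * d₁ + k₂ * d₂) = (q₂ * k₁) * d₁ + k₂ * (q₂ * d₂) from by ring]
      apply Nat.add_sub_cancel
    rwa [he] at hs
  rw [hld₁] at h3
  have h4 : q₁ ∣ q₂ * k₁ := (Nat.mul_dvd_mul_iff_right hd₁pos).mp h3
  exact (Nat.Coprime.dvd_of_dvd_mul_right (Nat.coprime_comm.mp hcop) h4)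

/-- Orthogonality of distinct Ramanujan sums. -/
theorem ramanujanSum_orthogonal (q₁ q₂ l : ℕ) (h₁ : 0 < q₁) (h₂ : 0 < q₂)
    (hne : q₁ ≠ q₂) (hl : 0 < l) (hd₁ : q₁ ∣ l) (hd₂ : q₂ ∣ l) :
    ∑ n ∈ Finset.range l, ramanujanSum q₁ n * ramanujanSum q₂ n = 0 := by
  have hq₁ : (q₁ : ℂ) ≠ 0 := Nat.cast_ne_zero.mpr h₁.ne'
  have hq₂ : (q₂ : ℂ) ≠ 0 := Nat.cast_ne_zero.mpr h₂.ne'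
  have hlC : (l : ℂ) ≠ 0 := Nat.cast_ne_zero.mpr hl.ne'
  obtain ⟨d₁, hld₁⟩ := hd₁
  obtain ⟨d₂, hld₂⟩ := hd₂
  have hd₁pos : 0 < d₁ := Nat.pos_of_ne_zero fun h => by simp [h] at hld₁; omega
  have hd₂pos : 0 < d₂ := Nat.pos_of_ne_zero fun h => by simp [h] at hld₂; omega
  simp only [ramanujanSum, Finset.sum_mul_sum]
  rw [Finset.sum_comm]
  refine Finset.sum_eq_zero fun k₁ hk₁ => ?_
  rw [Finset.sum_comm]
  refine Finset.sum_eq_zero fun k₂ hk₂ => ?_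
  simp only [Finset.mem_filter, Finset.mem_Icc] at hk₁ hk₂
  set m : ℕ := k₁ * d₁ + k₂ * d₂ with hm
  set z : ℂ := Complex.exp (2 * Real.pi * Complex.I * m / l) with hz
  have key : ∀ n : ℕ,
      Complex.exp (2 * Real.pi * Complex.I * k₁ * ((n : ℤ) : ℂ) / q₁) *
        Complex.exp (2 * Real.pi * Complex.I * k₂ * ((n : ℤ) : ℂ) / q₂) = z ^ n := by
    intro n
    rw [hz, ← Complex.exp_nat_mul, ← Complex.exp_add]
    congr 1
    have h1 : (l : ℂ) = (q₁ : ℂ) * d₁ := by exact_mod_cast congrArg (Nat.cast : ℕ → ℂ) hld₁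
    have hmC : (m : ℂ) = k₁ * d₁ + k₂ * d₂ := by push_cast [hm]; ring
    have h2 : (l : ℂ) = (q₂ : ℂ) * d₂ := by exact_mod_cast congrArg (Nat.cast : ℕ → ℂ) hld₂
    field_simp [hmC]
    linear_combination (((n : ℤ) : ℂ) * k₁ * q₂) * h1 +
      (((n : ℤ) : ℂ) * k₂ * q₁) * h2 - (((n : ℤ) : ℂ) * q₁ * q₂) * hmC
  have hnotdvd : ¬ (l ∣ m) := by
    intro hdvd
    have ha : q₁ ∣ q₂ := dvd_aux q₁ d₁ q₂ d₂ k₁ k₂ l hld₁ hld₂ hd₁pos hk₁.2 hdvd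
    have hb : q₂ ∣ q₁ := dvd_aux q₂ d₂ q₁ d₁ k₂ k₁ l hld₂ hld₁ hd₂pos hk₂.2
      (by rw [Nat.add_comm]; exact hdvd)
    exact hne (Nat.dvd_antisymm ha hb)
  have hzl : z ^ l = 1 := by
    rw [hz, ← Complex.exp_nat_mul]
    have : (l : ℂ) * (2 * Real.pi * Complex.I * m / l) = (m : ℤ) * (2 * Real.pi * Complex.I) := by
      push_cast
      field_simp
    rw [this, Complex.exp_int_mul_two_pi_mul_I]
  have hzne : z ≠ 1 := by
    intro h
    rw [hz, Complex.exp_eq_one_iff] at h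
    obtain ⟨t, ht⟩ := h
    have h2πI : (2 : ℂ) * Real.pi * Complex.I ≠ 0 := by
      simp [Real.pi_ne_zero, Complex.I_ne_zero]
    have hm' : (m : ℂ) = t * l := by
      have h' : 2 * (Real.pi : ℂ) * Complex.I * m = t * (2 * Real.pi * Complex.I) * l := by
        field_simp at ht
        linear_combination (2 * (Real.pi : ℂ) * Complex.I) * ht
      have h'' : (2 * (Real.pi : ℂ) * Complex.I) * (m : ℂ) =
          (2 * (Real.pi : ℂ) * Complex.I) * ((t : ℂ) * l) := by linear_combination h'
      exact mul_left_cancel₀ h2πI h''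
    have hmZ : (m : ℤ) = t * l := by exact_mod_cast hm'
    exact hnotdvd (Int.natCast_dvd_natCast.mp ⟨t, by push_cast [hmZ]; ring⟩)
  calc ∑ n ∈ Finset.range l,
        Complex.exp (2 * Real.pi * Complex.I * k₁ * ((n : ℤ) : ℂ) / q₁) *
          Complex.exp (2 * Real.pi * Complex.I * k₂ * ((n : ℤ) : ℂ) / q₂)
      = ∑ n ∈ Finset.range l, z ^ n := by exact Finset.sum_congr rfl fun n _ => key n
    _ = 0 := geom_sum_zero_of_ne_one z l hzne hzl
end

section
/- The sum-of-divisors function admits the Ramanujan series σ(n) = (π²n/6)·Σ_{q=1}^∞ c_q(n)/q². -/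
open Complex Finset ArithmeticFunction

private lemma expsum (d : ℕ) (hd : 0 < d) (n : ℤ) :
    ∑ k ∈ Finset.range d, Complex.exp (2 * Real.pi * Complex.I * k * n / d) =
      if (d : ℤ) ∣ n then (d : ℂ) else 0 := by
  have hd0 : (d : ℂ) ≠ 0 := Nat.cast_ne_zero.mpr hd.ne'
  set zz : ℂ := Complex.exp (2 * Real.pi * Complex.I * n / d) with hzz
  have hterm : ∀ k : ℕ, Complex.exp (2 * Real.pi * Complex.I * k * n / d) = zz ^ k := by
    intro k
    rw [hzz, ← Complex.exp_nat_mul]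
    ring_nf
  rw [Finset.sum_congr rfl fun k _ => hterm k]
  have hzzd : zz ^ d = 1 := by
    rw [hzz, ← Complex.exp_nat_mul, Complex.exp_eq_one_iff]
    exact ⟨n, by field_simp⟩
  have hzz1 : zz = 1 ↔ (d : ℤ) ∣ n := by
    rw [hzz, Complex.exp_eq_one_iff]
    constructor
    · rintro ⟨m, hm⟩
      refine ⟨m, ?_⟩
      have h2 : (2 * Real.pi * Complex.I) ≠ 0 := by
        simp [Real.pi_ne_zero, Complex.I_ne_zero]
      have h1 : (2 * Real.pi * Complex.I) * n = (2 * Real.pi * Complex.I) * (m * d) := by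
        field_simp at hm
        linear_combination (2 * Real.pi * Complex.I) * hm
      have : (n : ℂ) = d * m := by
        have := mul_left_cancel₀ h2 h1
        rw [this]; ring
      exact_mod_cast this
    · rintro ⟨m, hm⟩
      refine ⟨m, ?_⟩
      rw [hm]; push_cast; field_simp
  by_cases h : (d : ℤ) ∣ n
  · simp [h, hzz1.mpr h]
  · rw [if_neg h]
    have hzzne : zz ≠ 1 := fun hh => h (hzz1.mp hh)
    rw [geom_sum_eq hzzne, hzzd]
    simp


private lemma moebius_indicator (m : ℕ) :
    ∑ d ∈ m.divisors, ((moebius d : ℤ) : ℂ) = if m = 1 then 1 else 0 := by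
  have h := congrArg (fun f : ArithmeticFunction ℂ => f m)
    (coe_moebius_mul_coe_zeta (R := ℂ))
  simp only [coe_mul_zeta_apply, one_apply, intCoe_apply] at h
  exact h


private lemma expsum_Icc (m : ℕ) (hm : 0 < m) (n : ℤ) :
    ∑ k ∈ Finset.Icc 1 m, Complex.exp (2 * Real.pi * Complex.I * k * n / m) =
      if (m : ℤ) ∣ n then (m : ℂ) else 0 := by
  set f : ℕ → ℂ := fun k => Complex.exp (2 * Real.pi * Complex.I * k * n / m) with hf
  have h0m : f m = f 0 := by
    have hm0 : (m : ℂ) ≠ 0 := Nat.cast_ne_zero.mpr hm.ne'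
    simp only [hf, Nat.cast_zero]
    rw [show 2 * Real.pi * Complex.I * (m : ℂ) * n / m = n * (2 * Real.pi * Complex.I) by
      field_simp]
    rw [show (2 : ℂ) * Real.pi * Complex.I * 0 * n / m = 0 by ring]
    rw [Complex.exp_int_mul_two_pi_mul_I]
    exact Complex.exp_zero.symm
  have hins : Finset.range (m + 1) = insert 0 (Finset.Icc 1 m) := by
    ext x
    simp [Nat.lt_succ_iff, Nat.one_le_iff_ne_zero]
    omega
  have hA : ∑ k ∈ Finset.range (m + 1), f k = f 0 + ∑ k ∈ Finset.Icc 1 m, f k := by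
    rw [hins, Finset.sum_insert (by simp)]
  have h3 : ∑ k ∈ Finset.range (m + 1), f k = (∑ k ∈ Finset.range m, f k) + f m :=
    Finset.sum_range_succ f m
  have key : ∑ k ∈ Finset.Icc 1 m, f k = ∑ k ∈ Finset.range m, f k := by
    linear_combination h3 - hA + h0m
  rw [key]
  exact expsum m hm n

lemma ramanujanSum_eq (q : ℕ) (hq : 0 < q) (n : ℤ) :
    ramanujanSum q n =
      ∑ e ∈ q.divisors,
        (if (e : ℤ) ∣ n then (e : ℂ) * ((moebius (q / e) : ℤ) : ℂ) else 0) := by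
  have hq0 : q ≠ 0 := hq.ne'
  set E : ℕ → ℂ := fun k => Complex.exp (2 * Real.pi * Complex.I * k * n / q) with hE
  have step1 : ramanujanSum q n =
      ∑ k ∈ Finset.Icc 1 q, ∑ d ∈ q.divisors, (if d ∣ k then ((moebius d : ℤ) : ℂ) * E k else 0) := by
    rw [ramanujanSum, Finset.sum_filter]
    refine Finset.sum_congr rfl fun k hk => ?_
    have hk1 : 1 ≤ k := (Finset.mem_Icc.mp hk).1
    have hgcd : Nat.gcd k q ≠ 0 := fun h => by simp [Nat.gcd_eq_zero_iff] at h; omega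
    have hdiv : (Nat.gcd k q).divisors = q.divisors.filter (· ∣ k) := by
      ext d
      simp only [Nat.mem_divisors, Finset.mem_filter]
      constructor
      · rintro ⟨hd, _⟩
        exact ⟨⟨hd.trans (Nat.gcd_dvd_right k q), hq0⟩, hd.trans (Nat.gcd_dvd_left k q)⟩
      · rintro ⟨⟨hdq, _⟩, hdk⟩
        exact ⟨Nat.dvd_gcd hdk hdq, hgcd⟩
    have hmi := moebius_indicator (Nat.gcd k q)
    rw [hdiv, Finset.sum_filter] at hmi
    calc (if Nat.gcd k q = 1 then E k else 0)
        = (∑ d ∈ q.divisors, if d ∣ k then ((moebius d : ℤ) : ℂ) else 0) * E k := by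
          rw [hmi]; split <;> simp
      _ = ∑ d ∈ q.divisors, (if d ∣ k then ((moebius d : ℤ) : ℂ) * E k else 0) := by
          rw [Finset.sum_mul]
          refine Finset.sum_congr rfl fun d _ => ?_
          split <;> simp
  rw [step1, Finset.sum_comm]
  have step2 : ∀ d ∈ q.divisors,
      ∑ k ∈ Finset.Icc 1 q, (if d ∣ k then ((moebius d : ℤ) : ℂ) * E k else 0) =
        ((moebius d : ℤ) : ℂ) * (if ((q / d : ℕ) : ℤ) ∣ n then ((q / d : ℕ) : ℂ) else 0) := by
    intro d hd
    obtain ⟨hdq, -⟩ := Nat.mem_divisors.mp hd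
    have hdpos : 0 < d := Nat.pos_of_dvd_of_pos hdq hq
    have hmpos : 0 < q / d := Nat.div_pos (Nat.le_of_dvd hq hdq) hdpos
    have hmul : d * (q / d) = q := Nat.mul_div_cancel' hdq
    rw [← Finset.sum_filter, ← expsum_Icc (q / d) hmpos n, Finset.mul_sum]
    refine Finset.sum_nbij' (fun k => k / d) (fun j => d * j) ?_ ?_ ?_ ?_ ?_
    · intro k hk
      simp only [Finset.mem_filter, Finset.mem_Icc] at hk
      obtain ⟨⟨hk1, hkq⟩, hdk⟩ := hk
      simp only [Finset.mem_Icc]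
      constructor
      · exact Nat.one_le_div_iff hdpos |>.mpr (Nat.le_of_dvd (by omega) hdk)
      · exact Nat.div_le_div_right hkq
    · intro j hj
      simp only [Finset.mem_Icc] at hj
      simp only [Finset.mem_filter, Finset.mem_Icc]
      refine ⟨⟨?_, ?_⟩, Dvd.intro j rfl⟩
      · calc 1 ≤ j := hj.1
          _ ≤ d * j := Nat.le_mul_of_pos_left j hdpos
      · calc d * j ≤ d * (q / d) := Nat.mul_le_mul_left d hj.2
          _ = q := hmul
    · intro k hk
      simp only [Finset.mem_filter] at hk
      exact Nat.mul_div_cancel' hk.2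
    · intro j _
      exact Nat.mul_div_cancel_left j hdpos
    · intro k hk
      simp only [Finset.mem_filter, Finset.mem_Icc] at hk
      obtain ⟨⟨hk1, hkq⟩, hdk⟩ := hk
      congr 1
      have hqC : (q : ℂ) = (d : ℂ) * ((q / d : ℕ) : ℂ) := by exact_mod_cast hmul.symm
      have hdC : (d : ℂ) ≠ 0 := Nat.cast_ne_zero.mpr hdpos.ne'
      have hmC : ((q / d : ℕ) : ℂ) ≠ 0 := Nat.cast_ne_zero.mpr hmpos.ne'
      have hkC : (k : ℂ) = (d : ℂ) * ((k / d : ℕ) : ℂ) := by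
        exact_mod_cast (Nat.mul_div_cancel' hdk).symm
      rw [hE]
      simp only []
      rw [hqC, hkC]
      field_simp
      try ring
  rw [Finset.sum_congr rfl step2]
  rw [← Nat.sum_div_divisors q
    (fun e => if (e : ℤ) ∣ n then (e : ℂ) * ((moebius (q / e) : ℤ) : ℂ) else 0)]
  refine Finset.sum_congr rfl fun d hd => ?_
  obtain ⟨hdq, -⟩ := Nat.mem_divisors.mp hd
  rw [Nat.div_div_self hdq hq0]
  split <;> ring

open scoped LSeries.notation in
lemma hasSum_moebius_div_sq :
    HasSum (fun m : ℕ => ((moebius m : ℤ) : ℂ) / (m : ℂ) ^ 2) (6 / (Real.pi : ℂ) ^ 2) := by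
  have hs : (1 : ℝ) < (2 : ℂ).re := by norm_num
  have hsum : LSeriesSummable (↗moebius) 2 := LSeriesSummable_moebius_iff.mpr hs
  have hH : HasSum (LSeries.term (↗moebius) 2) (LSeries (↗moebius) 2) := hsum.hasSum
  have hval : LSeries (↗moebius) 2 = 6 / (Real.pi : ℂ) ^ 2 := by
    have h1 := LSeries_zeta_mul_Lseries_moebius (s := 2) hs
    rw [LSeries_zeta_eq_riemannZeta hs, riemannZeta_two] at h1
    have hpi : ((Real.pi : ℂ)) ^ 2 ≠ 0 := by
      simpa using pow_ne_zero 2 (Complex.ofReal_ne_zero.mpr Real.pi_ne_zero)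
    field_simp at h1 ⊢
    linear_combination h1
  have hfun : LSeries.term (↗moebius) 2 =
      fun m : ℕ => ((moebius m : ℤ) : ℂ) / (m : ℂ) ^ 2 := by
    funext m
    rcases Nat.eq_zero_or_pos m with rfl | hm
    · simp [LSeries.term]
    · rw [LSeries.term_of_ne_zero hm.ne']
      congr 1
      rw [show (2 : ℂ) = ((2 : ℕ) : ℂ) by norm_num, Complex.cpow_natCast]
  rw [hval, hfun] at hH
  exact hH

/-- Ramanujan's series for the sum-of-divisors function:
σ(n) = (π²n/6)·Σ_{q=1}^∞ c_q(n)/q². -/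
theorem sigma_ramanujan_series (n : ℕ) (hn : 0 < n) :
    HasSum
      (fun q : ℕ =>
        ((Real.pi ^ 2 * n / 6 : ℝ) : ℂ) * ramanujanSum (q + 1) n / ((q + 1 : ℕ) : ℂ) ^ 2)
      ((∑ d ∈ n.divisors, d : ℕ) : ℂ) := by
  set C : ℂ := ((Real.pi ^ 2 * n / 6 : ℝ) : ℂ) with hC
  set g : ℕ → ℕ → ℂ :=
    fun e q => if e ∣ q then C * e * ((moebius (q / e) : ℤ) : ℂ) / (q : ℂ) ^ 2 else 0 with hg
  have hpiC : ((Real.pi : ℂ)) ^ 2 ≠ 0 :=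
    pow_ne_zero 2 (Complex.ofReal_ne_zero.mpr Real.pi_ne_zero)
  -- Step II : each divisor's subseries
  have hgsum : ∀ e ∈ n.divisors, HasSum (fun q => g e (q + 1)) ((n / e : ℕ) : ℂ) := by
    intro e he
    obtain ⟨hen, -⟩ := Nat.mem_divisors.mp he
    have hepos : 0 < e := Nat.pos_of_dvd_of_pos hen hn
    have heC : (e : ℂ) ≠ 0 := Nat.cast_ne_zero.mpr hepos.ne'
    have hval : (C / e) * (6 / (Real.pi : ℂ) ^ 2) = ((n / e : ℕ) : ℂ) := by
      rw [Nat.cast_div hen heC, hC]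
      push_cast
      field_simp
    have h1 : HasSum (fun m : ℕ => (C / e) * (((moebius m : ℤ) : ℂ) / (m : ℂ) ^ 2))
        ((C / e) * (6 / (Real.pi : ℂ) ^ 2)) := hasSum_moebius_div_sq.mul_left _
    have hfun : (fun m : ℕ => (C / e) * (((moebius m : ℤ) : ℂ) / (m : ℂ) ^ 2)) =
        fun m => g e (e * m) := by
      funext m
      rcases Nat.eq_zero_or_pos m with rfl | hm
      · simp [hg]
      · have hdm : (e * m) / e = m := Nat.mul_div_cancel_left m hepos
        have hmC : (m : ℂ) ≠ 0 := Nat.cast_ne_zero.mpr hm.ne'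
        simp only [hg, if_pos (dvd_mul_right e m), hdm]
        push_cast
        field_simp
    have hinj : Function.Injective (fun m : ℕ => e * m) := fun a b h =>
      Nat.eq_of_mul_eq_mul_left hepos h
    have hzero : ∀ q, q ∉ Set.range (fun m : ℕ => e * m) → g e q = 0 := by
      intro q hq
      rw [hg]
      simp only []
      rw [if_neg]
      rintro ⟨c, hc⟩
      exact hq ⟨c, hc.symm⟩
    have h2 : HasSum (g e) ((n / e : ℕ) : ℂ) := by
      rw [← Function.Injective.hasSum_iff hinj hzero]
      have := hfun ▸ h1
      rwa [hval] at this
    have h3 := (hasSum_nat_add_iff' (f := g e) 1).mpr h2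
    have hg0 : g e 0 = 0 := by simp [hg]
    simpa [hg0] using h3
  -- Step III : sum over divisors
  have hsum := hasSum_sum hgsum
  have hval2 : ∑ e ∈ n.divisors, ((n / e : ℕ) : ℂ) = ((∑ d ∈ n.divisors, d : ℕ) : ℂ) := by
    rw [← Nat.cast_sum]
    congr 1
    exact Nat.sum_div_divisors n _root_.id
  rw [hval2] at hsum
  refine hsum.congr_fun fun q => ?_
  -- pointwise identity for q+1
  have hq1 : 0 < q + 1 := Nat.succ_pos q
  have hQ : ((q + 1 : ℕ) : ℂ) ≠ 0 := Nat.cast_ne_zero.mpr hq1.ne'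
  rw [ramanujanSum_eq (q + 1) hq1 n]
  rw [Finset.mul_sum, Finset.sum_div]
  have hlhs : ∀ e ∈ (q + 1).divisors,
      C * (if (e : ℤ) ∣ (n : ℤ) then (e : ℂ) * ((moebius ((q + 1) / e) : ℤ) : ℂ) else 0) /
        ((q + 1 : ℕ) : ℂ) ^ 2 =
      (if e ∣ n then C * e * ((moebius ((q + 1) / e) : ℤ) : ℂ) / ((q + 1 : ℕ) : ℂ) ^ 2 else 0) := by
    intro e _
    by_cases h : e ∣ n
    · rw [if_pos (Int.natCast_dvd_natCast.mpr h), if_pos h]; ring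
    · rw [if_neg (fun hh => h (Int.natCast_dvd_natCast.mp hh)), if_neg h]; simp
  rw [Finset.sum_congr rfl hlhs]
  rw [← Finset.sum_filter, ← Finset.sum_filter]
  have hfe : (q + 1).divisors.filter (· ∣ n) = n.divisors.filter (· ∣ (q + 1)) := by
    ext d
    simp only [Finset.mem_filter, Nat.mem_divisors]
    constructor
    · rintro ⟨⟨h1, -⟩, h2⟩; exact ⟨⟨h2, hn.ne'⟩, h1⟩
    · rintro ⟨⟨h1, -⟩, h2⟩; exact ⟨⟨h2, hq1.ne'⟩, h1⟩
  rw [hfe]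
end

section
/- The continued fraction conjectured by the Ramanujan machine for e: the limit of the recursively defined continued fraction 3 + (−1)/(4 + (−2)/(5 + (−3)/(6 + ···))) equals e; that is, if x_n denotes the n-th convergent of the continued fraction with partial numerators a_n = −n and partial denominators b_n = n + 3, then x_n → e. -/
/-- Numerators of the continued fraction 3 + (−1)/(4 + (−2)/(5 + ⋯)):
`eP (n+1)` is the numerator p_n, with p_{-1} = eP 0 = 1, p_0 = eP 1 = 3. -/
def eP : ℕ → ℝ
  | 0 => 1
  | 1 => 3
  | n + 2 => ((n + 1) + 3) * eP (n + 1) + (-((n : ℝ) + 1)) * eP n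

/-- Denominators: q_{-1} = eQ 0 = 0, q_0 = eQ 1 = 1. -/
def eQ : ℕ → ℝ
  | 0 => 0
  | 1 => 1
  | n + 2 => ((n + 1) + 3) * eQ (n + 1) + (-((n : ℝ) + 1)) * eQ n

/-- Partial sums of the exponential series at 1. -/
noncomputable def eS (m : ℕ) : ℝ := ∑ k ∈ Finset.range (m + 1), (1 : ℝ) / k.factorial

lemma eS_succ (m : ℕ) : eS (m + 1) = eS m + 1 / (m + 1).factorial := by
  simp [eS, Finset.sum_range_succ]

lemma key : ∀ n : ℕ,
    (eQ n = n * n.factorial ∧ eP n = n * n.factorial * eS (n + 1) + 1 / (n + 1)) ∧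
    (eQ (n + 1) = (n + 1) * (n + 1).factorial ∧
      eP (n + 1) = (n + 1) * (n + 1).factorial * eS (n + 2) + 1 / (n + 2)) := by
  intro n
  induction n with
  | zero =>
    refine ⟨⟨?_, ?_⟩, ?_, ?_⟩ <;>
      norm_num [eP, eQ, eS, Finset.sum_range_succ, Nat.factorial]
  | succ n ih =>
    refine ⟨⟨?_, ?_⟩, ?_, ?_⟩
    · push_cast
      exact ih.2.1
    · rw [show n + 1 + 1 = n + 2 from rfl, ih.2.2]
      push_cast
      ring
    · have hq : eQ (n + 2) = ((n + 1) + 3) * eQ (n + 1) + (-((n : ℝ) + 1)) * eQ n := rfl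
      rw [hq, ih.1.1, ih.2.1]
      have h2 : ((n + 2).factorial : ℝ) = (n + 2) * (n + 1).factorial := by
        rw [Nat.factorial_succ]; push_cast; ring
      have h1 : ((n + 1).factorial : ℝ) = (n + 1) * n.factorial := by
        rw [Nat.factorial_succ]; push_cast; ring
      push_cast [h2, h1]
      ring
    · have hp : eP (n + 2) = ((n + 1) + 3) * eP (n + 1) + (-((n : ℝ) + 1)) * eP n := rfl
      rw [hp, ih.1.2, ih.2.2, eS_succ (n + 2), eS_succ (n + 1)]
      have h3 : ((n + 3).factorial : ℝ) = (n + 3) * (n + 2) * (n + 1).factorial := by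
        rw [Nat.factorial_succ, Nat.factorial_succ]; push_cast; ring
      have h2 : ((n + 2).factorial : ℝ) = (n + 2) * (n + 1).factorial := by
        rw [Nat.factorial_succ]; push_cast; ring
      have h1 : ((n + 1).factorial : ℝ) = (n + 1) * n.factorial := by
        rw [Nat.factorial_succ]; push_cast; ring
      have hf : ((n + 1).factorial : ℝ) ≠ 0 := Nat.cast_ne_zero.2 (Nat.factorial_ne_zero _)
      have hf0 : ((n.factorial : ℝ)) ≠ 0 := Nat.cast_ne_zero.2 (Nat.factorial_ne_zero _)
      have hn1 : ((n : ℝ) + 1) ≠ 0 := by positivity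
      have hn2 : ((n : ℝ) + 2) ≠ 0 := by positivity
      have hn3 : ((n : ℝ) + 3) ≠ 0 := by positivity
      push_cast [h3, h2, h1]
      push_cast [h3, h2, h1] at *
      field_simp
      ring

/-- The Ramanujan machine's continued fraction for e:
the convergents x_n = p_n/q_n tend to e. -/
theorem ramanujan_machine_e :
    Filter.Tendsto (fun n : ℕ => eP (n + 1) / eQ (n + 1)) Filter.atTop
      (nhds (Real.exp 1)) := by
  have hform : ∀ n : ℕ, eP (n + 1) / eQ (n + 1)
      = eS (n + 2) + 1 / ((n + 1) * (n + 1).factorial * (n + 2)) := by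
    intro n
    obtain ⟨-, hq, hp⟩ := key n
    have hf : ((n + 1).factorial : ℝ) ≠ 0 := Nat.cast_ne_zero.2 (Nat.factorial_ne_zero _)
    have hn1 : ((n : ℝ) + 1) ≠ 0 := by positivity
    have hn2 : ((n : ℝ) + 2) ≠ 0 := by positivity
    rw [hp, hq]
    field_simp
  have hS : Filter.Tendsto (fun n : ℕ => eS (n + 2)) Filter.atTop (nhds (Real.exp 1)) := by
    have hsum : HasSum (fun k : ℕ => (1 : ℝ) ^ k / k.factorial) (Real.exp 1) := by
      rw [Real.exp_eq_exp_ℝ]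
      exact NormedSpace.expSeries_div_hasSum_exp (1 : ℝ)
    have := hsum.tendsto_sum_nat.comp (Filter.tendsto_add_atTop_nat 3)
    simpa [eS, Function.comp_def, one_pow] using this
  have hz : Filter.Tendsto
      (fun n : ℕ => 1 / (((n : ℝ) + 1) * (n + 1).factorial * (n + 2)))
      Filter.atTop (nhds 0) := by
    apply squeeze_zero (fun n => by positivity) (g := fun n : ℕ => 1 / ((n : ℝ) + 1))
    · intro n
      have hf : (1 : ℝ) ≤ (n + 1).factorial := by
        exact_mod_cast Nat.one_le_iff_ne_zero.2 (Nat.factorial_ne_zero _)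
      have h2 : (1 : ℝ) ≤ (n : ℝ) + 2 := by linarith [Nat.cast_nonneg (α := ℝ) n]
      have hn1 : (0 : ℝ) < (n : ℝ) + 1 := by positivity
      apply div_le_div_of_nonneg_left zero_le_one hn1
      calc (n : ℝ) + 1 ≤ ((n : ℝ) + 1) * (n + 1).factorial :=
            le_mul_of_one_le_right (by positivity) hf
        _ ≤ ((n : ℝ) + 1) * (n + 1).factorial * ((n : ℝ) + 2) :=
            le_mul_of_one_le_right (by positivity) h2
    · exact tendsto_one_div_add_atTop_nhds_zero_nat
  have := hS.add hz
  rw [add_zero] at this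
  refine this.congr fun n => ?_
  rw [hform n]
end
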